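/- arXiv:2310.20397 — 2 statements merged into one kernel-verified Lean document; each statement's English description precedes it below -/
import Mathlib

section
/- For all x, y ∈ E, the weighted second moment of the blockwise updates satisfies the exact identity Σ_{i∈𝕀} η_i ‖T_i x − T_i y‖_p² = ‖T_1 x − T_1 y‖² − ‖x − y‖² + ‖x − y‖_p², where T_1 x = (T'_1(x),…,T'_m(x)) is the map using all blocks. -/
/-!
Swap the sum over `𝕀` with the sum over blocks. In block `j` the indices `i` with `j ∈ M i`
carry total weight `p_j` and apply `T'_j`, the others carry `1 - p_j` and leave the block
unchanged, so block `j` contributes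
`p_j⁻¹ (p_j ‖T'_j x - T'_j y‖² + (1 - p_j) ‖x_j - y_j‖²)
  = ‖T'_j x - T'_j y‖² - ‖x_j - y_j‖² + p_j⁻¹ ‖x_j - y_j‖²`,
and summing over `j` gives the identity.
-/

open Finset
open scoped RealInnerProductSpace

noncomputable section

variable {m : ℕ} {I : Type*} [Fintype I]
variable {E : Fin m → Type*} [∀ j, NormedAddCommGroup (E j)]
  [∀ j, InnerProductSpace ℝ (E j)] [∀ j, FiniteDimensional ℝ (E j)]

/-- The blockwise map `T_i`: applies `T'_j` on the blocks `j ∈ M i`, identity elsewhere. -/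
def blockMap (M : I → Finset (Fin m)) (T' : ∀ j, PiLp 2 E → E j)
    (i : I) (x : PiLp 2 E) : PiLp 2 E :=
  WithLp.toLp 2 (fun j => if j ∈ M i then T' j x else x j)

/-- The squared weighted norm `‖z‖_p²  =  ∑ⱼ pⱼ⁻¹ ‖zⱼ‖²`. -/
def wNormSq (pw : Fin m → ℝ) (z : PiLp 2 E) : ℝ :=
  ∑ j, (pw j)⁻¹ * ‖z j‖ ^ 2

/-- The weighted norm `‖z‖_p`. -/
def wNorm (pw : Fin m → ℝ) (z : PiLp 2 E) : ℝ :=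
  Real.sqrt (wNormSq pw z)

section

omit [∀ j, InnerProductSpace ℝ (E j)] [∀ j, FiniteDimensional ℝ (E j)]

omit [Fintype I] in
theorem blockMap_sub_apply (M : I → Finset (Fin m)) (T' : ∀ j, PiLp 2 E → E j) (i : I)
    (x y : PiLp 2 E) (j : Fin m) :
    (blockMap M T' i x - blockMap M T' i y) j =
      if j ∈ M i then T' j x - T' j y else x j - y j := by
  simp only [PiLp.sub_apply, blockMap]
  split_ifs <;> rfl

omit [Fintype I] [∀ j, NormedAddCommGroup (E j)] in
theorem blockMap_of_eq_univ {M : I → Finset (Fin m)} (T' : ∀ j, PiLp 2 E → E j) {i : I}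
    (h : M i = univ) (x : PiLp 2 E) :
    blockMap M T' i x = WithLp.toLp 2 (fun j => T' j x) := by
  simp [blockMap, h]

theorem sum_mul_wNormSq (η : I → ℝ) (pw : Fin m → ℝ) (z : I → PiLp 2 E) :
    ∑ i, η i * wNormSq pw (z i) = ∑ j, (pw j)⁻¹ * ∑ i, η i * ‖z i j‖ ^ 2 := by
  simp only [wNormSq, mul_sum]
  rw [sum_comm]
  refine sum_congr rfl fun j _ => sum_congr rfl fun i _ => ?_
  ring

end

theorem Finset.sum_mul_ite {R ι : Type*} [CommRing R] (s : Finset ι) (η : ι → R)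
    (P : ι → Prop) [DecidablePred P] (a b : R) :
    ∑ i ∈ s, η i * (if P i then a else b) =
      (∑ i ∈ s, if P i then η i else 0) * a
        + (∑ i ∈ s, η i - ∑ i ∈ s, if P i then η i else 0) * b := by
  rw [← sum_sub_distrib, sum_mul, sum_mul, ← sum_add_distrib]
  refine sum_congr rfl fun i _ => ?_
  split_ifs <;> ring

theorem inv_mul_add_one_sub_mul {K : Type*} [Field K] {p : K} (hp : p ≠ 0) (a b : K) :
    p⁻¹ * (p * a + (1 - p) * b) = a - b + p⁻¹ * b := by
  field_simp
  ring

theorem statement2_general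
    (M : I → Finset (Fin m))
    (i₁ : I) (hi₁ : M i₁ = Finset.univ)
    (η : I → ℝ) (hηsum : ∑ i : I, η i = 1)
    (pw : Fin m → ℝ) (hpw : ∀ j, pw j = ∑ i : I, if j ∈ M i then η i else 0)
    (hp : ∀ j, 0 < pw j)
    (T' : ∀ j, PiLp 2 E → E j) :
    ∀ x y : PiLp 2 E,
      ∑ i : I, η i * wNormSq pw (blockMap M T' i x - blockMap M T' i y)
        = ‖blockMap M T' i₁ x - blockMap M T' i₁ y‖ ^ 2 - ‖x - y‖ ^ 2
            + wNormSq pw (x - y) := by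
  intro x y
  have hblock (j : Fin m) :
      ∑ i, η i * ‖(blockMap M T' i x - blockMap M T' i y) j‖ ^ 2
        = pw j * ‖T' j x - T' j y‖ ^ 2 + (1 - pw j) * ‖x j - y j‖ ^ 2 := by
    simp only [blockMap_sub_apply, apply_ite (‖·‖ ^ 2)]
    rw [sum_mul_ite, hηsum, ← hpw]
  rw [sum_mul_wNormSq, PiLp.norm_sq_eq_of_L2, PiLp.norm_sq_eq_of_L2,
    blockMap_of_eq_univ T' hi₁, blockMap_of_eq_univ T' hi₁, wNormSq, ← sum_sub_distrib,
    ← sum_add_distrib]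
  refine sum_congr rfl fun j _ => ?_
  rw [hblock, inv_mul_add_one_sub_mul (hp j).ne', PiLp.sub_apply]
  rfl

/-- exact identity for the expected squared weighted distance of blockwise updates:
`∑ᵢ ηᵢ ‖Tᵢx − Tᵢy‖_p² = ‖T₁x − T₁y‖² − ‖x−y‖² + ‖x−y‖_p²`. -/
theorem statement2
    (M : I → Finset (Fin m)) (hM : ∀ i, (M i).Nonempty)
    (i₁ : I) (hi₁ : M i₁ = Finset.univ)
    (η : I → ℝ) (hη : ∀ i, 0 ≤ η i) (hηsum : ∑ i : I, η i = 1)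
    (pw : Fin m → ℝ) (hpw : ∀ j, pw j = ∑ i : I, if j ∈ M i then η i else 0)
    (hp : ∀ j, 0 < pw j)
    (T' : ∀ j, PiLp 2 E → E j) :
    ∀ x y : PiLp 2 E,
      ∑ i : I, η i * wNormSq pw (blockMap M T' i x - blockMap M T' i y)
        = ‖blockMap M T' i₁ x - blockMap M T' i₁ y‖ ^ 2 - ‖x - y‖ ^ 2
            + wNormSq pw (x - y) :=
  statement2_general M i₁ hi₁ η hηsum pw hpw hp T'
end
end

section
/- Let G ⊆ E be convex, suppose each T'_j is a Borel measurable self-map consistent with G (each T_i maps G to G), and suppose T_1 (the blockwise map using all blocks) is a$\alpha$-fne on G with constant ᾱ ∈ (0,1) and violation at most ε̄ ∈ [0,1). Then the Markov operator 𝒫 is a$\alpha$-fne in measure with constant ᾱ and violation at most p̄ε̄: for all μ₁, μ₂ ∈ 𝒫₂(G) and every optimal coupling γ of (μ₁, μ₂) with respect to d_{W2,p}, one has d_{W2,p}(μ₁𝒫, μ₂𝒫)² ≤ (1 + p̄ε̄) d_{W2,p}(μ₁, μ₂)² − ((1−ᾱ)/ᾱ) ∫ Σ_{i∈𝕀} η_i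 ψ_p(x, y, T_i x, T_i y) dγ(x,y). -/
/-!
Run the chain with the same random index `i` from both starting points: pushing an optimal
coupling `γ` forward under `(x, y) ↦ (Tᵢ x, Tᵢ y)` and mixing with the weights `ηᵢ` gives a
coupling of `μ₁𝒫` and `μ₂𝒫` whose cost is `∫ ∑ᵢ ηᵢ ‖Tᵢ x - Tᵢ y‖_p² dγ`. Since block `j` is
updated with total weight `pⱼ`, the weights `pⱼ⁻¹` cancel exactly:
`∑ᵢ ηᵢ ‖Tᵢ x - Tᵢ y‖_p² = ‖T₁ x - T₁ y‖² + ‖x - y‖_p² - ‖x - y‖²` and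
`∑ᵢ ηᵢ ψ_p(x, y, Tᵢ x, Tᵢ y) = ‖(x - T₁ x) - (y - T₁ y)‖²`. The inequality for `T₁` together
with `‖x - y‖² ≤ p̄ ‖x - y‖_p²` bounds the integrand pointwise on `G × G`, where `γ` lives.
-/

open Finset MeasureTheory Filter
open scoped RealInnerProductSpace

noncomputable section

variable {m : ℕ} {I : Type*} [Fintype I]
variable {E : Fin m → Type*} [∀ j, NormedAddCommGroup (E j)]
  [∀ j, InnerProductSpace ℝ (E j)] [∀ j, FiniteDimensional ℝ (E j)]
variable [∀ j, MeasurableSpace (E j)] [∀ j, BorelSpace (E j)]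
variable [MeasurableSpace (PiLp 2 E)] [BorelSpace (PiLp 2 E)]

/-- `γ` is a coupling of `μ` and `ν`. -/
def IsCoupling (γ : Measure (PiLp 2 E × PiLp 2 E)) (μ ν : Measure (PiLp 2 E)) : Prop :=
  IsProbabilityMeasure γ ∧ γ.map Prod.fst = μ ∧ γ.map Prod.snd = ν

/-- The transport cost `(∫ ‖x−y‖_p² dγ)^{1/2}` of a coupling `γ`. -/
def couplingCost (pw : Fin m → ℝ) (γ : Measure (PiLp 2 E × PiLp 2 E)) : ℝ :=
  Real.sqrt (∫ z, wNormSq pw (z.1 - z.2) ∂γ)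

/-- The weighted Wasserstein-2 distance `d_{W2,p}`. -/
def W2 (pw : Fin m → ℝ) (μ ν : Measure (PiLp 2 E)) : ℝ :=
  sInf {r | ∃ γ, IsCoupling γ μ ν ∧ r = couplingCost pw γ}

/-- `γ` is an optimal coupling of `(μ, ν)` w.r.t. `d_{W2,p}`. -/
def IsOptimalCoupling (pw : Fin m → ℝ) (γ : Measure (PiLp 2 E × PiLp 2 E))
    (μ ν : Measure (PiLp 2 E)) : Prop :=
  IsCoupling γ μ ν ∧ couplingCost pw γ = W2 pw μ ν

/-- The Markov operator `μ ↦ μ𝒫 = ∑ᵢ ηᵢ (Tᵢ)_* μ`. -/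
def markovOp (η : I → ℝ) (T : I → PiLp 2 E → PiLp 2 E)
    (μ : Measure (PiLp 2 E)) : Measure (PiLp 2 E) :=
  ∑ i : I, (ENNReal.ofReal (η i)) • μ.map (T i)

/-- `μ ∈ 𝒫₂(G)` : Borel probability measure concentrated on `G` with finite second moment. -/
def MemP2 (G : Set (PiLp 2 E)) (μ : Measure (PiLp 2 E)) : Prop :=
  IsProbabilityMeasure μ ∧ μ Gᶜ = 0 ∧ Integrable (fun x => ‖x‖ ^ 2) μ

/-- `d_{W2,p}(μ, inv𝒫)` : distance from `μ` to the invariant measures in `𝒫₂(G)`. -/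
def dInv (pw : Fin m → ℝ) (η : I → ℝ) (T : I → PiLp 2 E → PiLp 2 E)
    (G : Set (PiLp 2 E)) (μ : Measure (PiLp 2 E)) : ℝ :=
  sInf {r | ∃ π, markovOp η T π = π ∧ MemP2 G π ∧ r = W2 pw μ π}

/-- The expected weighted transport discrepancy `∑ᵢ ηᵢ ψ_p(x, y, Tᵢx, Tᵢy)`. -/
def discrep (pw : Fin m → ℝ) (η : I → ℝ) (T : I → PiLp 2 E → PiLp 2 E)
    (z : PiLp 2 E × PiLp 2 E) : ℝ :=
  ∑ i : I, η i * wNormSq pw ((z.1 - T i z.1) - (z.2 - T i z.2))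

/-- The invariant Markov transport discrepancy `Ψ`. -/
def Psi (pw : Fin m → ℝ) (η : I → ℝ) (T : I → PiLp 2 E → PiLp 2 E)
    (G : Set (PiLp 2 E)) (μ : Measure (PiLp 2 E)) : ℝ :=
  sInf {r | ∃ π γ, markovOp η T π = π ∧ MemP2 G π ∧ IsOptimalCoupling pw γ μ π ∧
    r = Real.sqrt (∫ z, discrep pw η T z ∂γ)}

end

section WeightedNorm

variable {m : ℕ} {E : Fin m → Type*} [∀ j, NormedAddCommGroup (E j)]

theorem wNormSq_nonneg {pw : Fin m → ℝ} (hpw : ∀ j, 0 ≤ pw j) (z : PiLp 2 E) :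
    0 ≤ wNormSq pw z :=
  Finset.sum_nonneg fun j _ => mul_nonneg (inv_nonneg.2 (hpw j)) (sq_nonneg _)

theorem continuous_wNormSq (pw : Fin m → ℝ) : Continuous (wNormSq pw : PiLp 2 E → ℝ) := by
  unfold wNormSq
  fun_prop

theorem abs_wNormSq_le (pw : Fin m → ℝ) (z : PiLp 2 E) :
    |wNormSq pw z| ≤ (∑ j, |(pw j)⁻¹|) * ‖z‖ ^ 2 := by
  rw [Finset.sum_mul]
  refine (Finset.abs_sum_le_sum_abs _ _).trans (Finset.sum_le_sum fun j _ => ?_)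
  rw [abs_mul, abs_of_nonneg (sq_nonneg ‖z j‖)]
  gcongr
  exact PiLp.norm_apply_le z j

theorem norm_sq_le_mul_wNormSq {pw : Fin m → ℝ} {pbar : ℝ} (hp : ∀ j, 0 < pw j)
    (hpbar : ∀ j, pw j ≤ pbar) (z : PiLp 2 E) : ‖z‖ ^ 2 ≤ pbar * wNormSq pw z := by
  rw [PiLp.norm_sq_eq_of_L2, wNormSq, Finset.mul_sum]
  refine Finset.sum_le_sum fun j _ => ?_
  rw [← mul_assoc, ← div_eq_mul_inv]
  exact le_mul_of_one_le_left (sq_nonneg _) ((one_le_div (hp j)).2 (hpbar j))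

end WeightedNorm

section Blockwise

variable {m : ℕ} {I : Type*}

@[simp]
theorem blockMap_apply {E : Fin m → Type*} (M : I → Finset (Fin m)) (T' : ∀ j, PiLp 2 E → E j)
    (i : I) (x : PiLp 2 E) (j : Fin m) :
    blockMap M T' i x j = if j ∈ M i then T' j x else x j :=
  rfl

variable [Fintype I]

theorem sum_mul_sum_inv_mul_ite {M : I → Finset (Fin m)} {η : I → ℝ} {pw : Fin m → ℝ}
    (hηsum : ∑ i, η i = 1) (hpw : ∀ j, pw j = ∑ i, if j ∈ M i then η i else 0)
    (hp : ∀ j, pw j ≠ 0) (a b : Fin m → ℝ) :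
    ∑ i, η i * ∑ j, (pw j)⁻¹ * (if j ∈ M i then a j else b j)
      = ∑ j, a j + ∑ j, ((pw j)⁻¹ - 1) * b j := by
  have hcol : ∀ j, ∑ i, η i * (if j ∈ M i then a j else b j) = pw j * a j + (1 - pw j) * b j := by
    intro j
    have hsplit : ∀ i, η i * (if j ∈ M i then a j else b j)
        = (if j ∈ M i then η i else 0) * a j + (η i - if j ∈ M i then η i else 0) * b j := by
      intro i; split_ifs <;> ring
    rw [Finset.sum_congr rfl fun i _ => hsplit i, Finset.sum_add_distrib, ← Finset.sum_mul,
      ← Finset.sum_mul, Finset.sum_sub_distrib, hηsum, ← hpw j]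
  calc ∑ i, η i * ∑ j, (pw j)⁻¹ * (if j ∈ M i then a j else b j)
      = ∑ j, (pw j)⁻¹ * ∑ i, η i * (if j ∈ M i then a j else b j) := by
        simp_rw [Finset.mul_sum]
        rw [Finset.sum_comm]
        exact Finset.sum_congr rfl fun j _ => Finset.sum_congr rfl fun i _ => by ring
    _ = ∑ j, (a j + ((pw j)⁻¹ - 1) * b j) := by
        refine Finset.sum_congr rfl fun j _ => ?_
        rw [hcol]
        field_simp [hp j]
    _ = ∑ j, a j + ∑ j, ((pw j)⁻¹ - 1) * b j := Finset.sum_add_distrib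

variable {E : Fin m → Type*} [∀ j, NormedAddCommGroup (E j)]
  {M : I → Finset (Fin m)} {η : I → ℝ} {pw : Fin m → ℝ} {i₁ : I}

theorem sum_mul_wNormSq_blockMap_sub (hηsum : ∑ i, η i = 1)
    (hpw : ∀ j, pw j = ∑ i, if j ∈ M i then η i else 0) (hp : ∀ j, pw j ≠ 0)
    (hi₁ : M i₁ = Finset.univ) (T' : ∀ j, PiLp 2 E → E j) (x y : PiLp 2 E) :
    ∑ i, η i * wNormSq pw (blockMap M T' i x - blockMap M T' i y)
      = ‖blockMap M T' i₁ x - blockMap M T' i₁ y‖ ^ 2 + wNormSq pw (x - y) - ‖x - y‖ ^ 2 := by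
  have hcoord : ∀ i j, ‖(blockMap M T' i x - blockMap M T' i y) j‖ ^ 2
      = if j ∈ M i then ‖T' j x - T' j y‖ ^ 2 else ‖x j - y j‖ ^ 2 := by
    intro i j
    split_ifs <;> simp [*]
  simp only [wNormSq, hcoord]
  rw [sum_mul_sum_inv_mul_ite hηsum hpw hp]
  simp only [PiLp.norm_sq_eq_of_L2, PiLp.sub_apply, blockMap_apply, hi₁, Finset.mem_univ,
    if_true, sub_mul, one_mul, Finset.sum_sub_distrib]
  ring

theorem discrep_blockMap_eq (hηsum : ∑ i, η i = 1)
    (hpw : ∀ j, pw j = ∑ i, if j ∈ M i then η i else 0) (hp : ∀ j, pw j ≠ 0)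
    (hi₁ : M i₁ = Finset.univ) (T' : ∀ j, PiLp 2 E → E j) (x y : PiLp 2 E) :
    discrep pw η (blockMap M T') (x, y)
      = ‖(x - blockMap M T' i₁ x) - (y - blockMap M T' i₁ y)‖ ^ 2 := by
  have hcoord : ∀ i j, ‖((x - blockMap M T' i x) - (y - blockMap M T' i y)) j‖ ^ 2
      = if j ∈ M i then ‖(x j - T' j x) - (y j - T' j y)‖ ^ 2 else 0 := by
    intro i j
    split_ifs <;> simp [*]
  simp only [discrep, wNormSq, hcoord]
  rw [sum_mul_sum_inv_mul_ite hηsum hpw hp]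
  simp only [PiLp.norm_sq_eq_of_L2, PiLp.sub_apply, blockMap_apply, hi₁, Finset.mem_univ,
    if_true, mul_zero, Finset.sum_const_zero, add_zero]

theorem sum_mul_wNormSq_blockMap_sub_le (hηsum : ∑ i, η i = 1)
    (hpw : ∀ j, pw j = ∑ i, if j ∈ M i then η i else 0) (hp : ∀ j, 0 < pw j)
    {pbar : ℝ} (hpbar : ∀ j, pw j ≤ pbar) (hi₁ : M i₁ = Finset.univ)
    (T' : ∀ j, PiLp 2 E → E j) {ε c : ℝ} (hε : 0 ≤ ε) {x y : PiLp 2 E}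
    (hxy : ‖blockMap M T' i₁ x - blockMap M T' i₁ y‖ ^ 2
        ≤ (1 + ε) * ‖x - y‖ ^ 2
          - c * ‖(x - blockMap M T' i₁ x) - (y - blockMap M T' i₁ y)‖ ^ 2) :
    ∑ i, η i * wNormSq pw (blockMap M T' i x - blockMap M T' i y)
      ≤ (1 + pbar * ε) * wNormSq pw (x - y) - c * discrep pw η (blockMap M T') (x, y) := by
  have hp' : ∀ j, pw j ≠ 0 := fun j => (hp j).ne'
  rw [sum_mul_wNormSq_blockMap_sub hηsum hpw hp' hi₁, discrep_blockMap_eq hηsum hpw hp' hi₁]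
  have := mul_le_mul_of_nonneg_left (norm_sq_le_mul_wNormSq hp hpbar (x - y)) hε
  linarith

end Blockwise

section Integration

variable {X Y ι : Type*} [MeasurableSpace X] [MeasurableSpace Y] [Fintype ι]

theorem integral_sum_smul_map_of_nonneg (γ : Measure X) {η : ι → ℝ} (hη : ∀ i, 0 ≤ η i)
    {g : ι → X → Y} (hg : ∀ i, Measurable (g i)) {φ : Y → ℝ} (hφ : Measurable φ)
    (hφ0 : 0 ≤ φ) :
    ∫ y, φ y ∂(∑ i, ENNReal.ofReal (η i) • γ.map (g i)) = ∫ x, ∑ i, η i * φ (g i x) ∂γ := by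
  have hterm₀ : ∀ i x, 0 ≤ η i * φ (g i x) := fun i x => mul_nonneg (hη i) (hφ0 _)
  have hmeas : ∀ i, Measurable fun x => ENNReal.ofReal (φ (g i x)) :=
    fun i => (hφ.comp (hg i)).ennreal_ofReal
  -- Through lower integrals, no integrability assumption is needed.
  rw [integral_eq_lintegral_of_nonneg_ae (ae_of_all _ hφ0) hφ.aestronglyMeasurable,
    integral_eq_lintegral_of_nonneg_ae
      (ae_of_all _ fun x => Finset.sum_nonneg fun i _ => hterm₀ i x)
      (Finset.measurable_sum _ fun i _ => (hφ.comp (hg i)).const_mul _).aestronglyMeasurable]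
  congr 1
  simp_rw [ENNReal.ofReal_sum_of_nonneg fun i _ => hterm₀ i _, ENNReal.ofReal_mul (hη _)]
  rw [lintegral_finsetSum_measure, lintegral_finsetSum _ fun i _ => (hmeas i).const_mul _]
  refine Finset.sum_congr rfl fun i _ => ?_
  rw [lintegral_smul_measure, lintegral_map hφ.ennreal_ofReal (hg i),
    lintegral_const_mul _ (hmeas i), smul_eq_mul]

theorem integral_le_sub_of_ae_le {μ : Measure X} {f g h : X → ℝ} {a c : ℝ} (hc : 0 < c)
    (hf : 0 ≤ᵐ[μ] f) (hh : 0 ≤ᵐ[μ] h) (hg : Integrable g μ) (hhm : AEStronglyMeasurable h μ)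
    (hfgh : ∀ᵐ x ∂μ, f x ≤ a * g x - c * h x) :
    ∫ x, f x ∂μ ≤ a * ∫ x, g x ∂μ - c * ∫ x, h x ∂μ := by
  have hhi : Integrable h μ := by
    refine (hg.const_mul (a / c)).mono' hhm ?_
    filter_upwards [hf, hh, hfgh] with x hfx hhx hx
    rw [Real.norm_eq_abs, abs_of_nonneg hhx, div_mul_eq_mul_div, le_div_iff₀ hc]
    linarith [show (0 : ℝ) ≤ f x from hfx]
  rw [← integral_const_mul, ← integral_const_mul, ← integral_sub (hg.const_mul a)
    (hhi.const_mul c)]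
  exact integral_mono_of_nonneg hf ((hg.const_mul a).sub (hhi.const_mul c)) hfgh

end Integration

section Couplings

variable {m : ℕ} {E : Fin m → Type*} [MeasurableSpace (PiLp 2 E)]
  {γ : Measure (PiLp 2 E × PiLp 2 E)} {μ ν : Measure (PiLp 2 E)}

theorem IsCoupling.ae_fst_mem (hγ : IsCoupling γ μ ν) {G : Set (PiLp 2 E)} (hG : μ Gᶜ = 0) :
    ∀ᵐ z ∂γ, z.1 ∈ G :=
  ae_of_ae_map measurable_fst.aemeasurable (by rw [hγ.2.1]; exact ae_iff.2 hG)

theorem IsCoupling.ae_snd_mem (hγ : IsCoupling γ μ ν) {G : Set (PiLp 2 E)} (hG : ν Gᶜ = 0) :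
    ∀ᵐ z ∂γ, z.2 ∈ G :=
  ae_of_ae_map measurable_snd.aemeasurable (by rw [hγ.2.2]; exact ae_iff.2 hG)

theorem IsCoupling.sum_smul_map {I : Type*} [Fintype I] (hγ : IsCoupling γ μ ν) {η : I → ℝ}
    (hη : ∀ i, 0 ≤ η i) (hηsum : ∑ i, η i = 1) {T : I → PiLp 2 E → PiLp 2 E}
    (hT : ∀ i, Measurable (T i)) :
    IsCoupling (∑ i, ENNReal.ofReal (η i) • γ.map (Prod.map (T i) (T i)))
      (markovOp η T μ) (markovOp η T ν) := by
  have hprob := hγ.1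
  have hTT : ∀ i, Measurable (Prod.map (T i) (T i)) := fun i => (hT i).prodMap (hT i)
  refine ⟨⟨?_⟩, ?_, ?_⟩
  · simp only [Measure.coe_finsetSum, Finset.sum_apply, Measure.smul_apply,
      Measure.map_apply (hTT _) MeasurableSet.univ, Set.preimage_univ, measure_univ,
      smul_eq_mul, mul_one]
    rw [← ENNReal.ofReal_sum_of_nonneg fun i _ => hη i, hηsum, ENNReal.ofReal_one]
  all_goals
    rw [Measure.map_finset_sum' (by fun_prop), markovOp]
    refine Finset.sum_congr rfl fun i _ => ?_
    rw [Measure.map_smul, Measure.map_map (by fun_prop) (hTT i)]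
  · rw [Prod.map_fst', ← Measure.map_map (hT i) measurable_fst, hγ.2.1]
  · rw [Prod.map_snd', ← Measure.map_map (hT i) measurable_snd, hγ.2.2]

variable [∀ j, NormedAddCommGroup (E j)] {pw : Fin m → ℝ}

theorem W2_nonneg (pw : Fin m → ℝ) (μ ν : Measure (PiLp 2 E)) : 0 ≤ W2 pw μ ν :=
  Real.sInf_nonneg fun _ ⟨_, _, hr⟩ => hr ▸ Real.sqrt_nonneg _

theorem W2_le_couplingCost (hγ : IsCoupling γ μ ν) : W2 pw μ ν ≤ couplingCost pw γ :=
  csInf_le ⟨0, fun _ ⟨_, _, hr⟩ => hr ▸ Real.sqrt_nonneg _⟩ ⟨γ, hγ, rfl⟩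

theorem sq_W2_le_integral (hpw : ∀ j, 0 ≤ pw j) (hγ : IsCoupling γ μ ν) :
    W2 pw μ ν ^ 2 ≤ ∫ z, wNormSq pw (z.1 - z.2) ∂γ := by
  calc W2 pw μ ν ^ 2 ≤ couplingCost pw γ ^ 2 :=
        pow_le_pow_left₀ (W2_nonneg pw μ ν) (W2_le_couplingCost hγ) 2
    _ = ∫ z, wNormSq pw (z.1 - z.2) ∂γ :=
        Real.sq_sqrt (integral_nonneg fun _ => wNormSq_nonneg hpw _)

theorem IsOptimalCoupling.sq_W2_eq (hpw : ∀ j, 0 ≤ pw j) (hγ : IsOptimalCoupling pw γ μ ν) :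
    W2 pw μ ν ^ 2 = ∫ z, wNormSq pw (z.1 - z.2) ∂γ := by
  rw [← hγ.2]
  exact Real.sq_sqrt (integral_nonneg fun _ => wNormSq_nonneg hpw _)

variable [∀ j, SecondCountableTopology (E j)] [BorelSpace (PiLp 2 E)]

theorem IsCoupling.integrable_wNormSq_sub (hγ : IsCoupling γ μ ν)
    (hμ : Integrable (fun x => ‖x‖ ^ 2) μ) (hν : Integrable (fun x => ‖x‖ ^ 2) ν)
    (pw : Fin m → ℝ) : Integrable (fun z => wNormSq pw (z.1 - z.2)) γ := by
  have h₁ : Integrable (fun z : PiLp 2 E × PiLp 2 E => ‖z.1‖ ^ 2) γ :=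
    (hγ.2.1 ▸ hμ).comp_measurable measurable_fst
  have h₂ : Integrable (fun z : PiLp 2 E × PiLp 2 E => ‖z.2‖ ^ 2) γ :=
    (hγ.2.2 ▸ hν).comp_measurable measurable_snd
  refine ((h₁.add h₂).const_mul (2 * ∑ j, |(pw j)⁻¹|)).mono'
    ((continuous_wNormSq pw).comp (by fun_prop)).aestronglyMeasurable (ae_of_all _ fun z => ?_)
  have hsub : ‖z.1 - z.2‖ ^ 2 ≤ 2 * (‖z.1‖ ^ 2 + ‖z.2‖ ^ 2) := by
    nlinarith [norm_sub_le z.1 z.2, norm_nonneg (z.1 - z.2), sq_nonneg (‖z.1‖ - ‖z.2‖)]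
  calc ‖wNormSq pw (z.1 - z.2)‖ ≤ (∑ j, |(pw j)⁻¹|) * ‖z.1 - z.2‖ ^ 2 := abs_wNormSq_le pw _
    _ ≤ (∑ j, |(pw j)⁻¹|) * (2 * (‖z.1‖ ^ 2 + ‖z.2‖ ^ 2)) :=
        mul_le_mul_of_nonneg_left hsub (Finset.sum_nonneg fun j _ => abs_nonneg _)
    _ = _ := by simp only [Pi.add_apply]; ring

end Couplings

section Measurability

variable {m : ℕ} {I : Type*} {E : Fin m → Type*} [∀ j, NormedAddCommGroup (E j)]
  [∀ j, SecondCountableTopology (E j)] [MeasurableSpace (PiLp 2 E)] [BorelSpace (PiLp 2 E)]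

theorem measurable_discrep [Fintype I] (pw : Fin m → ℝ) (η : I → ℝ)
    {T : I → PiLp 2 E → PiLp 2 E} (hT : ∀ i, Measurable (T i)) :
    Measurable (discrep pw η T) :=
  Finset.measurable_sum _ fun i _ => measurable_const.mul ((continuous_wNormSq pw).measurable.comp
    ((measurable_fst.sub ((hT i).comp measurable_fst)).sub
      (measurable_snd.sub ((hT i).comp measurable_snd))))

variable [∀ j, MeasurableSpace (E j)] [∀ j, BorelSpace (E j)]

theorem measurable_blockMap (M : I → Finset (Fin m)) {T' : ∀ j, PiLp 2 E → E j}
    (hmeas : ∀ j, Measurable (T' j)) (i : I) : Measurable (blockMap M T' i) := by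
  refine (PiLp.continuous_toLp 2 E).measurable.comp (measurable_pi_lambda _ fun j => ?_)
  split_ifs
  · exact hmeas j
  · exact ((continuous_apply j).comp (PiLp.continuous_ofLp 2 E)).measurable

end Measurability

variable {m : ℕ} {I : Type*} [Fintype I]
variable {E : Fin m → Type*} [∀ j, NormedAddCommGroup (E j)]
  [∀ j, InnerProductSpace ℝ (E j)] [∀ j, FiniteDimensional ℝ (E j)]
variable [∀ j, MeasurableSpace (E j)] [∀ j, BorelSpace (E j)]
variable [MeasurableSpace (PiLp 2 E)] [BorelSpace (PiLp 2 E)]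

theorem statement5_general
    (M : I → Finset (Fin m))
    (i₁ : I) (hi₁ : M i₁ = Finset.univ)
    (η : I → ℝ) (hη : ∀ i, 0 ≤ η i) (hηsum : ∑ i : I, η i = 1)
    (pw : Fin m → ℝ) (hpw : ∀ j, pw j = ∑ i : I, if j ∈ M i then η i else 0)
    (hp : ∀ j, 0 < pw j)
    (pbar : ℝ) (hpbar : IsGreatest (Set.range pw) pbar)
    (T' : ∀ j, PiLp 2 E → E j) (hmeas : ∀ j, Measurable (T' j))
    (G : Set (PiLp 2 E))
    (α ε : ℝ) (hα : α ∈ Set.Ioo (0 : ℝ) 1) (hε : ε ∈ Set.Ico (0 : ℝ) 1)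
    (hT1 : ∀ x ∈ G, ∀ y ∈ G,
      ‖blockMap M T' i₁ x - blockMap M T' i₁ y‖ ^ 2
        ≤ (1 + ε) * ‖x - y‖ ^ 2
          - ((1 - α) / α) * ‖(x - blockMap M T' i₁ x) - (y - blockMap M T' i₁ y)‖ ^ 2) :
    ∀ μ₁ μ₂ : Measure (PiLp 2 E), MemP2 G μ₁ → MemP2 G μ₂ →
      ∀ γ, IsOptimalCoupling pw γ μ₁ μ₂ →
        (W2 pw (markovOp η (blockMap M T') μ₁) (markovOp η (blockMap M T') μ₂)) ^ 2
          ≤ (1 + pbar * ε) * (W2 pw μ₁ μ₂) ^ 2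
            - ((1 - α) / α) * ∫ z, discrep pw η (blockMap M T') z ∂γ := by
  intro μ₁ μ₂ hμ₁ hμ₂ γ hγ
  have hpw₀ : ∀ j, 0 ≤ pw j := fun j => (hp j).le
  have hT : ∀ i, Measurable (blockMap M T' i) := measurable_blockMap M hmeas
  have hsum₀ : ∀ v : I → PiLp 2 E, 0 ≤ ∑ i, η i * wNormSq pw (v i) :=
    fun v => Finset.sum_nonneg fun i _ => mul_nonneg (hη i) (wNormSq_nonneg hpw₀ _)
  have hG : ∀ᵐ z ∂γ, z.1 ∈ G ∧ z.2 ∈ G :=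
    (hγ.1.ae_fst_mem hμ₁.2.1).and (hγ.1.ae_snd_mem hμ₂.2.1)
  calc _ ≤ ∫ z, wNormSq pw (z.1 - z.2)
          ∂(∑ i, ENNReal.ofReal (η i) • γ.map (Prod.map (blockMap M T' i) (blockMap M T' i))) :=
        sq_W2_le_integral hpw₀ (hγ.1.sum_smul_map hη hηsum hT)
    _ = ∫ z, ∑ i, η i * wNormSq pw (blockMap M T' i z.1 - blockMap M T' i z.2) ∂γ :=
        integral_sum_smul_map_of_nonneg γ hη (fun i => (hT i).prodMap (hT i))
          ((continuous_wNormSq pw).measurable.comp (measurable_fst.sub measurable_snd))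
          fun z => wNormSq_nonneg hpw₀ _
    _ ≤ (1 + pbar * ε) * ∫ z, wNormSq pw (z.1 - z.2) ∂γ
          - ((1 - α) / α) * ∫ z, discrep pw η (blockMap M T') z ∂γ := by
        refine integral_le_sub_of_ae_le (div_pos (sub_pos.2 hα.2) hα.1)
          (ae_of_all _ fun _ => hsum₀ _) (ae_of_all _ fun _ => hsum₀ _)
          (hγ.1.integrable_wNormSq_sub hμ₁.2.2 hμ₂.2.2 pw)
          (measurable_discrep pw η hT).aestronglyMeasurable ?_
        filter_upwards [hG] with z ⟨hx, hy⟩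
        exact sum_mul_wNormSq_blockMap_sub_le hηsum hpw hp (fun j => hpbar.2 ⟨j, rfl⟩) hi₁ T' hε.1
          (hT1 _ hx _ hy)
    _ = _ := by rw [hγ.sq_W2_eq hpw₀]

/-- if each `T_i` is a Borel measurable self-map of the convex set `G` and `T₁` is
aα-fne on `G` with constant `α` and violation at most `ε`, then the Markov operator is aα-fne in
measure with constant `α` and violation at most `p̄ ε`. -/
theorem statement5
    (M : I → Finset (Fin m)) (hM : ∀ i, (M i).Nonempty)
    (i₁ : I) (hi₁ : M i₁ = Finset.univ)
    (η : I → ℝ) (hη : ∀ i, 0 ≤ η i) (hηsum : ∑ i : I, η i = 1)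
    (pw : Fin m → ℝ) (hpw : ∀ j, pw j = ∑ i : I, if j ∈ M i then η i else 0)
    (hp : ∀ j, 0 < pw j)
    (pbar : ℝ) (hpbar : IsGreatest (Set.range pw) pbar)
    (T' : ∀ j, PiLp 2 E → E j) (hmeas : ∀ j, Measurable (T' j))
    (G : Set (PiLp 2 E)) (hG : Convex ℝ G)
    (hself : ∀ i, Set.MapsTo (blockMap M T' i) G G)
    (α ε : ℝ) (hα : α ∈ Set.Ioo (0 : ℝ) 1) (hε : ε ∈ Set.Ico (0 : ℝ) 1)
    (hT1 : ∀ x ∈ G, ∀ y ∈ G,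
      ‖blockMap M T' i₁ x - blockMap M T' i₁ y‖ ^ 2
        ≤ (1 + ε) * ‖x - y‖ ^ 2
          - ((1 - α) / α) * ‖(x - blockMap M T' i₁ x) - (y - blockMap M T' i₁ y)‖ ^ 2) :
    ∀ μ₁ μ₂ : Measure (PiLp 2 E), MemP2 G μ₁ → MemP2 G μ₂ →
      ∀ γ, IsOptimalCoupling pw γ μ₁ μ₂ →
        (W2 pw (markovOp η (blockMap M T') μ₁) (markovOp η (blockMap M T') μ₂)) ^ 2
          ≤ (1 + pbar * ε) * (W2 pw μ₁ μ₂) ^ 2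
            - ((1 - α) / α) * ∫ z, discrep pw η (blockMap M T') z ∂γ :=
  statement5_general M i₁ hi₁ η hη hηsum pw hpw hp pbar hpbar T' hmeas G α ε hα hε hT1
end
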